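/- arXiv:0909.1468 — 7 statements merged into one kernel-verified Lean document; each statement's English description precedes it below -/
import Mathlib

section
/- For any probability measure ρ on a measurable space G, any measurable function f: G → ℝ, and any λ > 0, it holds that E_{g'∼ρ} log E_{g∼ρ} exp(λ(f(g') - f(g)) - (λ²/2)(f(g') - f(g))²) ≤ 0. -/
open MeasureTheory Real

/-- Symmetrization trick: for any probability measure `ρ`, measurable `f : G → ℝ` with the
needed integrability, and any `λ > 0`,
`E_{g'∼ρ} log E_{g∼ρ} exp(λ(f g' - f g) - (λ²/2)(f g' - f g)²) ≤ 0`. -/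
theorem symmetrization_log_mgf_nonpos {G : Type*} [MeasurableSpace G]
    (ρ : Measure G) [IsProbabilityMeasure ρ] (f : G → ℝ) (hf : Measurable f)
    (lam : ℝ) (hlam : 0 < lam)
    (hint : ∀ g', Integrable
      (fun g => Real.exp (lam * (f g' - f g) - lam ^ 2 / 2 * (f g' - f g) ^ 2)) ρ)
    (hint' : Integrable (fun g' => Real.log (∫ g,
      Real.exp (lam * (f g' - f g) - lam ^ 2 / 2 * (f g' - f g) ^ 2) ∂ρ)) ρ) :
    ∫ g', Real.log (∫ g,
        Real.exp (lam * (f g' - f g) - lam ^ 2 / 2 * (f g' - f g) ^ 2) ∂ρ) ∂ρ ≤ 0 := by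
  set F : G × G → ℝ := fun p =>
    Real.exp (lam * (f p.1 - f p.2) - lam ^ 2 / 2 * (f p.1 - f p.2) ^ 2) with hF
  have hFmeas : Measurable F := by
    apply Real.measurable_exp.comp
    exact ((measurable_const.mul ((hf.comp measurable_fst).sub
      (hf.comp measurable_snd))).sub (measurable_const.mul
      (((hf.comp measurable_fst).sub (hf.comp measurable_snd)).pow measurable_const)))
  -- pointwise bound : F ≤ exp (1/2)
  have hFbound : ∀ p, F p ≤ Real.exp (1 / 2) := by
    intro p
    apply Real.exp_le_exp.2
    nlinarith [sq_nonneg (lam * (f p.1 - f p.2) - 1)]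
  have hFint : Integrable F (ρ.prod ρ) := by
    refine Integrable.mono' (integrable_const (Real.exp (1 / 2)))
      hFmeas.aestronglyMeasurable ?_
    filter_upwards with p
    rw [Real.norm_eq_abs, abs_of_pos (Real.exp_pos _)]
    exact hFbound p
  -- symmetrization: double integral ≤ 1
  have hswapint : Integrable (fun p : G × G => F p.swap) (ρ.prod ρ) := by
    refine Integrable.mono' (integrable_const (Real.exp (1 / 2)))
      (hFmeas.comp measurable_swap).aestronglyMeasurable ?_
    filter_upwards with p
    rw [Real.norm_eq_abs, abs_of_pos (Real.exp_pos _)]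
    exact hFbound p.swap
  have hJ : ∫ z, F z ∂(ρ.prod ρ) ≤ 1 := by
    have hsum : ∀ p : G × G, F p + F p.swap ≤ 2 := by
      intro p
      have h1 : F p + F p.swap =
          2 * Real.exp (-(lam ^ 2 / 2 * (f p.1 - f p.2) ^ 2)) *
            Real.cosh (lam * (f p.1 - f p.2)) := by
        simp only [hF, Prod.fst_swap, Prod.snd_swap, Real.cosh_eq]
        have e1 : lam * (f p.1 - f p.2) - lam ^ 2 / 2 * (f p.1 - f p.2) ^ 2 =
            -(lam ^ 2 / 2 * (f p.1 - f p.2) ^ 2) + lam * (f p.1 - f p.2) := by ring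
        have e2 : lam * (f p.2 - f p.1) - lam ^ 2 / 2 * (f p.2 - f p.1) ^ 2 =
            -(lam ^ 2 / 2 * (f p.1 - f p.2) ^ 2) + -(lam * (f p.1 - f p.2)) := by ring
        rw [e1, e2, Real.exp_add, Real.exp_add]
        ring
      have h2 : Real.cosh (lam * (f p.1 - f p.2)) ≤
          Real.exp ((lam * (f p.1 - f p.2)) ^ 2 / 2) := Real.cosh_le_exp_half_sq _
      have h3 : 2 * Real.exp (-(lam ^ 2 / 2 * (f p.1 - f p.2) ^ 2)) *
          Real.exp ((lam * (f p.1 - f p.2)) ^ 2 / 2) = 2 := by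
        rw [mul_assoc, ← Real.exp_add,
          show -(lam ^ 2 / 2 * (f p.1 - f p.2) ^ 2) + (lam * (f p.1 - f p.2)) ^ 2 / 2
            = 0 by ring, Real.exp_zero, mul_one]
      calc F p + F p.swap = _ := h1
        _ ≤ 2 * Real.exp (-(lam ^ 2 / 2 * (f p.1 - f p.2) ^ 2)) *
            Real.exp ((lam * (f p.1 - f p.2)) ^ 2 / 2) := by
            apply mul_le_mul_of_nonneg_left h2
            positivity
        _ = 2 := h3
    have hdouble : (∫ z, F z ∂(ρ.prod ρ)) + (∫ z, F z ∂(ρ.prod ρ)) ≤ 2 := by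
      have heq : ∫ z, F z.swap ∂(ρ.prod ρ) = ∫ z, F z ∂(ρ.prod ρ) :=
        integral_prod_swap F
      calc (∫ z, F z ∂(ρ.prod ρ)) + (∫ z, F z ∂(ρ.prod ρ))
          = ∫ z, (F z + F z.swap) ∂(ρ.prod ρ) := by
            rw [integral_add hFint hswapint, heq]
        _ ≤ ∫ _z, (2 : ℝ) ∂(ρ.prod ρ) :=
            integral_mono (hFint.add hswapint) (integrable_const 2) hsum
        _ = 2 := by simp
    linarith
  -- inner integral is positive
  have hIpos : ∀ g', 0 < ∫ g, F (g', g) ∂ρ := fun g' => integral_exp_pos (hint g')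
  -- log x ≤ x - 1
  have hIint : Integrable (fun g' => ∫ g, F (g', g) ∂ρ) ρ := hFint.integral_prod_left
  have hlog : ∫ g', Real.log (∫ g, F (g', g) ∂ρ) ∂ρ ≤
      ∫ g', ((∫ g, F (g', g) ∂ρ) - 1) ∂ρ := by
    refine integral_mono hint' (hIint.sub (integrable_const 1)) ?_
    intro g'
    exact Real.log_le_sub_one_of_pos (hIpos g')
  have hfub : ∫ g', ∫ g, F (g', g) ∂ρ ∂ρ = ∫ z, F z ∂(ρ.prod ρ) :=
    integral_integral hFint
  calc ∫ g', Real.log (∫ g, F (g', g) ∂ρ) ∂ρ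
      ≤ ∫ g', ((∫ g, F (g', g) ∂ρ) - 1) ∂ρ := hlog
    _ = (∫ g', ∫ g, F (g', g) ∂ρ ∂ρ) - 1 := by
        rw [integral_sub hIint (integrable_const 1)]; simp
    _ ≤ 0 := by rw [hfub]; linarith
end

section
/- For the Lq-loss ℓ(y, y') = |y - y'|^q with q > 1 and y, y' ∈ [-B, B], the infimum over -B ≤ y₁ < y < y₂ ≤ B of (q-1)(y₂-y₁) / (q(y-y₁)(y₂-y)[(y-y₁)^{q-1} + (y₂-y)^{q-1}]) equals ((q-1)/(q(2B)^q)) · inf_{0<t<1} 1/(t(1-t)(t^{q-1} + (1-t)^{q-1})), and for 1 < q ≤ 2 this infimum equals (q-1)/(qB^q), attained at t = 1/2. -/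
open Real

/-! Writing `y = y₁ + t (y₂ - y₁)`, the quantity factors as `(q-1)/(q (y₂-y₁)^q)` times a function
of `t` alone, so the infimum splits into the worst prefactor, at `y₂ - y₁ = 2B`, times the
infimum over `t`. For `q ≤ 2` the map `x ↦ x^{q-1}` is concave, and together with
`t (1-t) ≤ 1/4` this puts the minimum over `t` at `t = 1/2`. -/

noncomputable def lqEta (q y₁ y y₂ : ℝ) : ℝ :=
  (q - 1) * (y₂ - y₁) / (q * (y - y₁) * (y₂ - y) * ((y - y₁) ^ (q - 1) + (y₂ - y) ^ (q - 1)))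

noncomputable def lqShape (q t : ℝ) : ℝ :=
  1 / (t * (1 - t) * (t ^ (q - 1) + (1 - t) ^ (q - 1)))

def lqEtaValues (q B : ℝ) : Set ℝ :=
  {v | ∃ y₁ y y₂ : ℝ, -B ≤ y₁ ∧ y₁ < y ∧ y < y₂ ∧ y₂ ≤ B ∧ v = lqEta q y₁ y y₂}

def lqShapeValues (q : ℝ) : Set ℝ :=
  {w | ∃ t : ℝ, 0 < t ∧ t < 1 ∧ w = lqShape q t}

lemma lqShape_pos (q : ℝ) {t : ℝ} (ht₀ : 0 < t) (ht₁ : t < 1) : 0 < lqShape q t := by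
  have h₁ : 0 < 1 - t := by linarith
  unfold lqShape
  positivity

lemma lqShape_half (q : ℝ) : lqShape q (1 / 2) = 2 ^ q := by
  have hpow : (1 / 2 : ℝ) ^ (q - 1) = 2 * (2 ^ q)⁻¹ := by
    rw [rpow_sub (by norm_num), rpow_one, one_div, inv_rpow (by norm_num)]
    ring
  unfold lqShape
  rw [show (1 : ℝ) - 1 / 2 = 1 / 2 by norm_num, hpow]
  field_simp
  ring

lemma lqEta_eq_mul_lqShape (q : ℝ) {y₁ y y₂ : ℝ} (h₁ : y₁ < y) (h₂ : y < y₂) :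
    lqEta q y₁ y y₂ = (q - 1) / (q * (y₂ - y₁) ^ q) * lqShape q ((y - y₁) / (y₂ - y₁)) := by
  have hd : 0 < y₂ - y₁ := by linarith
  set t := (y - y₁) / (y₂ - y₁)
  have ht₀ : 0 < t := div_pos (by linarith) hd
  have ht₁ : 0 < 1 - t := by rw [sub_pos, div_lt_one hd]; linarith
  have hy : y - y₁ = t * (y₂ - y₁) := (div_mul_cancel₀ _ hd.ne').symm
  have hy' : y₂ - y = (1 - t) * (y₂ - y₁) := by rw [sub_mul, ← hy]; ring
  have hdq : (y₂ - y₁) ^ q = (y₂ - y₁) ^ (q - 1) * (y₂ - y₁) := by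
    rw [← rpow_add_one hd.ne']; ring_nf
  unfold lqEta lqShape
  rw [hy, hy', mul_rpow ht₀.le hd.le, mul_rpow ht₁.le hd.le, hdq]
  have : 0 < (y₂ - y₁) ^ (q - 1) := rpow_pos_of_pos hd _
  have : 0 < t ^ (q - 1) := rpow_pos_of_pos ht₀ _
  have : 0 < (1 - t) ^ (q - 1) := rpow_pos_of_pos ht₁ _
  field_simp

lemma sInf_lqEtaValues {q B : ℝ} (hq : 1 < q) (hB : 0 < B) :
    sInf (lqEtaValues q B) = (q - 1) / (q * (2 * B) ^ q) * sInf (lqShapeValues q) := by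
  set c := (q - 1) / (q * (2 * B) ^ q)
  have hc : 0 ≤ c := div_nonneg (by linarith) (by positivity)
  have hmem : ∀ t, 0 < t → t < 1 → c * lqShape q t ∈ lqEtaValues q B := by
    intro t ht₀ ht₁
    refine ⟨-B, -B + t * (2 * B), B, le_rfl, by nlinarith, by nlinarith, le_rfl, ?_⟩
    rw [lqEta_eq_mul_lqShape q (by nlinarith) (by nlinarith), show B - -B = 2 * B by ring,
      add_sub_cancel_left, mul_div_cancel_right₀ _ (by positivity)]
  rw [← smul_eq_mul, ← Real.sInf_smul_of_nonneg hc]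
  apply csInf_eq_csInf_of_forall_exists_le
  · rintro v ⟨y₁, y, y₂, hy₁, h₁, h₂, hy₂, rfl⟩
    have hd : 0 < y₂ - y₁ := by linarith
    have ht₀ : 0 < (y - y₁) / (y₂ - y₁) := div_pos (by linarith) hd
    have ht₁ : (y - y₁) / (y₂ - y₁) < 1 := by rw [div_lt_one hd]; linarith
    refine ⟨c * lqShape q ((y - y₁) / (y₂ - y₁)),
      Set.smul_mem_smul_set ⟨_, ht₀, ht₁, rfl⟩, ?_⟩
    rw [lqEta_eq_mul_lqShape q h₁ h₂]
    have hle : c ≤ (q - 1) / (q * (y₂ - y₁) ^ q) := by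
      have : (y₂ - y₁) ^ q ≤ (2 * B) ^ q := rpow_le_rpow hd.le (by linarith) (by linarith)
      show (q - 1) / (q * (2 * B) ^ q) ≤ _
      gcongr
    exact mul_le_mul_of_nonneg_right hle (lqShape_pos q ht₀ ht₁).le
  · rintro _ ⟨_, ⟨t, ht₀, ht₁, rfl⟩, rfl⟩
    exact ⟨_, hmem t ht₀ ht₁, le_rfl⟩

lemma lqShape_half_le {q t : ℝ} (hq : 1 ≤ q) (hq₂ : q ≤ 2) (ht₀ : 0 < t) (ht₁ : t < 1) :
    lqShape q (1 / 2) ≤ lqShape q t := by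
  have h₁ : 0 < 1 - t := by linarith
  have hconc := (concaveOn_rpow (by linarith : 0 ≤ q - 1) (by linarith : q - 1 ≤ 1)).2
    (Set.mem_Ici.2 ht₀.le) (Set.mem_Ici.2 h₁.le)
    (by norm_num : (0 : ℝ) ≤ 1 / 2) (by norm_num : (0 : ℝ) ≤ 1 / 2) (by norm_num)
  simp only [smul_eq_mul, show (1 / 2 : ℝ) * t + 1 / 2 * (1 - t) = 1 / 2 by ring] at hconc
  have hsum : 0 ≤ t ^ (q - 1) + (1 - t) ^ (q - 1) := by positivity
  have hprod : t * (1 - t) ≤ 1 / 2 * (1 - 1 / 2) := by nlinarith [sq_nonneg (2 * t - 1)]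
  have hhalf : t ^ (q - 1) + (1 - t) ^ (q - 1) ≤ (1 / 2) ^ (q - 1) + (1 - 1 / 2) ^ (q - 1) := by
    norm_num at hconc ⊢
    linarith
  unfold lqShape
  exact one_div_le_one_div_of_le (by positivity) (mul_le_mul hprod hhalf hsum (by norm_num))

lemma sInf_lqShapeValues {q : ℝ} (hq : 1 ≤ q) (hq₂ : q ≤ 2) :
    sInf (lqShapeValues q) = lqShape q (1 / 2) := by
  refine IsLeast.csInf_eq ⟨⟨1 / 2, by norm_num, by norm_num, rfl⟩, ?_⟩
  rintro _ ⟨t, ht₀, ht₁, rfl⟩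
  exact lqShape_half_le hq hq₂ ht₀ ht₁

/-- For the `L_q`-loss with `q > 1` on `[-B, B]`, the infimum over `-B ≤ y₁ < y < y₂ ≤ B` of
`(q-1)(y₂-y₁) / (q(y-y₁)(y₂-y)[(y-y₁)^{q-1} + (y₂-y)^{q-1}])` equals
`((q-1)/(q(2B)^q)) · inf_{0<t<1} 1/(t(1-t)(t^{q-1} + (1-t)^{q-1}))`, and for `1 < q ≤ 2`
this infimum equals `(q-1)/(qB^q)`, the inner infimum being attained at `t = 1/2`. -/
theorem lq_eta_infimum (q B : ℝ) (hq : 1 < q) (hB : 0 < B) :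
    sInf {v : ℝ | ∃ y₁ y y₂ : ℝ, -B ≤ y₁ ∧ y₁ < y ∧ y < y₂ ∧ y₂ ≤ B ∧
        v = (q - 1) * (y₂ - y₁) /
          (q * (y - y₁) * (y₂ - y) * ((y - y₁) ^ (q - 1) + (y₂ - y) ^ (q - 1)))} =
      ((q - 1) / (q * (2 * B) ^ q)) *
        sInf {w : ℝ | ∃ t : ℝ, 0 < t ∧ t < 1 ∧
          w = 1 / (t * (1 - t) * (t ^ (q - 1) + (1 - t) ^ (q - 1)))} ∧
    (q ≤ 2 →
      sInf {w : ℝ | ∃ t : ℝ, 0 < t ∧ t < 1 ∧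
          w = 1 / (t * (1 - t) * (t ^ (q - 1) + (1 - t) ^ (q - 1)))} =
        1 / ((1 / 2 : ℝ) * (1 - 1 / 2) *
          ((1 / 2 : ℝ) ^ (q - 1) + (1 - 1 / 2 : ℝ) ^ (q - 1))) ∧
      sInf {v : ℝ | ∃ y₁ y y₂ : ℝ, -B ≤ y₁ ∧ y₁ < y ∧ y < y₂ ∧ y₂ ≤ B ∧
        v = (q - 1) * (y₂ - y₁) /
          (q * (y - y₁) * (y₂ - y) * ((y - y₁) ^ (q - 1) + (y₂ - y) ^ (q - 1)))} =
        (q - 1) / (q * B ^ q)) := by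
  show sInf (lqEtaValues q B) = _ * sInf (lqShapeValues q) ∧
    (q ≤ 2 → sInf (lqShapeValues q) = lqShape q (1 / 2) ∧ sInf (lqEtaValues q B) = _)
  refine ⟨sInf_lqEtaValues hq hB, fun hq₂ => ⟨sInf_lqShapeValues hq.le hq₂, ?_⟩⟩
  rw [sInf_lqEtaValues hq hB, sInf_lqShapeValues hq.le hq₂, lqShape_half,
    mul_rpow (by norm_num) hB.le]
  have : 0 < (2 : ℝ) ^ q := by positivity
  field_simp
end

section
/- Let q > 1, 0 < λ₀ ≤ (q-1)/(q(B+b)^q), y ∈ [-B, B] with B ≥ b > 0. Then the function ζ(y') = exp(-λ₀|y - y'|^q) is concave on [-b, b]. -/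
/-!
Write `ζ = g ∘ d` with `d y' = |y - y'|` and `g u = exp (-(λ₀ u ^ q))`. The distance `d` is convex
and maps `[-b, b]` into `[0, B + b]`, while `g` is antitone there and concave: on `u > 0`,
`g'' u = exp (-(λ₀ u ^ q)) · λ₀ q u ^ (q - 2) · (λ₀ q u ^ q - (q - 1))`, and the last factor is
`≤ 0` as long as `λ₀ q u ^ q ≤ q - 1`, which the bound on `λ₀` guarantees for `u ≤ B + b`.
A concave antitone function of a convex function is concave.
-/

open Real Set

theorem ConcaveOn.comp_convexOn_of_mapsTo {E : Type*} [AddCommGroup E] [Module ℝ E]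
    {s : Set E} {t : Set ℝ} {f : E → ℝ} {g : ℝ → ℝ} (hg : ConcaveOn ℝ t g)
    (hf : ConvexOn ℝ s f) (hg' : AntitoneOn g t) (hfst : MapsTo f s t) :
    ConcaveOn ℝ s (g ∘ f) :=
  ⟨hf.1, fun _ hx _ hz _ _ ha hc hac =>
    (hg.2 (hfst hx) (hfst hz) ha hc hac).trans <|
      hg' (hfst (hf.1 hx hz ha hc hac)) (hg.1 (hfst hx) (hfst hz) ha hc hac)
        (hf.2 hx hz ha hc hac)⟩

section ExpNegMulRpow

variable {q lam : ℝ}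

theorem antitoneOn_exp_neg_mul_rpow (hq : 0 ≤ q) (hlam : 0 ≤ lam) :
    AntitoneOn (fun u => exp (-(lam * u ^ q))) (Ici 0) := fun _ hu _ _ huv =>
  exp_le_exp.mpr <| neg_le_neg <| mul_le_mul_of_nonneg_left (rpow_le_rpow hu huv hq) hlam

theorem hasDerivAt_exp_neg_mul_rpow {x : ℝ} (h : x ≠ 0 ∨ 1 ≤ q) :
    HasDerivAt (fun u => exp (-(lam * u ^ q)))
      (exp (-(lam * x ^ q)) * -(lam * (q * x ^ (q - 1)))) x :=
  ((hasDerivAt_rpow_const h).const_mul lam).neg.exp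

theorem hasDerivAt_deriv_exp_neg_mul_rpow {x : ℝ} (hx : 0 < x) :
    HasDerivAt (fun u => exp (-(lam * u ^ q)) * -(lam * (q * u ^ (q - 1))))
      (exp (-(lam * x ^ q)) * (lam * q * x ^ (q - 2)) * (lam * q * x ^ q - (q - 1))) x := by
  have hsq : x ^ (q - 1) * x ^ (q - 1) = x ^ (q - 2) * x ^ q := by
    rw [← rpow_add hx, ← rpow_add hx]
    ring_nf
  refine ((hasDerivAt_exp_neg_mul_rpow (Or.inl hx.ne')).mul
    (((hasDerivAt_rpow_const (p := q - 1) (Or.inl hx.ne')).const_mul q).const_mul lam).neg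
    ).congr_deriv ?_
  simp only [Pi.neg_apply, show q - 1 - 1 = q - 2 by ring]
  linear_combination exp (-(lam * x ^ q)) * lam ^ 2 * q ^ 2 * hsq

theorem concaveOn_exp_neg_mul_rpow {C : ℝ} (hq : 0 ≤ q) (hlam : 0 ≤ lam)
    (hC : lam * q * C ^ q ≤ q - 1) :
    ConcaveOn ℝ (Icc 0 C) (fun u => exp (-(lam * u ^ q))) := by
  refine concaveOn_of_hasDerivWithinAt2_nonpos (convex_Icc 0 C)
    (f' := fun x => exp (-(lam * x ^ q)) * -(lam * (q * x ^ (q - 1))))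
    (f'' := fun x => exp (-(lam * x ^ q)) * (lam * q * x ^ (q - 2)) * (lam * q * x ^ q - (q - 1)))
    ((continuous_rpow_const hq).const_mul lam).neg.rexp.continuousOn
    (fun x hx => ?_) (fun x hx => ?_) (fun x hx => ?_)
  all_goals rw [interior_Icc] at hx
  · exact (hasDerivAt_exp_neg_mul_rpow (Or.inl hx.1.ne')).hasDerivWithinAt
  · exact (hasDerivAt_deriv_exp_neg_mul_rpow hx.1).hasDerivWithinAt
  · have hle : lam * q * x ^ q ≤ q - 1 :=
      (mul_le_mul_of_nonneg_left (rpow_le_rpow hx.1.le hx.2.le hq) (mul_nonneg hlam hq)).trans hC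
    exact mul_nonpos_of_nonneg_of_nonpos
      (mul_nonneg (exp_pos _).le (mul_nonneg (mul_nonneg hlam hq) (rpow_nonneg hx.1.le _)))
      (by linarith)

end ExpNegMulRpow

theorem mapsTo_abs_sub_Icc {y B b : ℝ} (hy : y ∈ Icc (-B) B) :
    MapsTo (fun y' => |y - y'|) (Icc (-b) b) (Icc 0 (B + b)) := fun _ hx =>
  ⟨abs_nonneg _, (abs_sub _ _).trans (add_le_add (abs_le.mpr hy) (abs_le.mpr hx))⟩

theorem mul_le_of_pos_of_le_div {lam a d : ℝ} (hlam : 0 < lam) (ha : 0 ≤ a)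
    (h : lam ≤ a / d) : lam * d ≤ a := by
  have hd : 0 < d := by
    by_contra! hd
    exact (h.trans (div_nonpos_of_nonneg_of_nonpos ha hd)).not_gt hlam
  exact (le_div_iff₀ hd).mp h

theorem exp_neg_lq_concave_general (q B b lam0 y : ℝ) (hq : 1 < q)
    (hlam0 : 0 < lam0) (hlam0' : lam0 ≤ (q - 1) / (q * (B + b) ^ q))
    (hy : y ∈ Set.Icc (-B) B) :
    ConcaveOn ℝ (Set.Icc (-b) b) (fun y' => Real.exp (-(lam0 * |y - y'| ^ q))) := by
  have hq0 : 0 ≤ q := by linarith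
  have hbound : lam0 * q * (B + b) ^ q ≤ q - 1 := by
    rw [mul_assoc]
    exact mul_le_of_pos_of_le_div hlam0 (by linarith) hlam0'
  have hdist : ConvexOn ℝ (Icc (-b) b) (fun y' => |y - y'|) := by
    simpa only [Real.dist_eq, abs_sub_comm] using convexOn_dist y (convex_Icc (-b) b)
  exact (concaveOn_exp_neg_mul_rpow hq0 hlam0.le hbound).comp_convexOn_of_mapsTo hdist
    ((antitoneOn_exp_neg_mul_rpow hq0 hlam0.le).mono Icc_subset_Ici_self) (mapsTo_abs_sub_Icc hy)

/-- Let `q > 1`, `B ≥ b > 0`, `0 < λ₀ ≤ (q-1)/(q(B+b)^q)` and `y ∈ [-B, B]`. Then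
`ζ(y') = exp(-λ₀ |y - y'|^q)` is concave on `[-b, b]`. -/
theorem exp_neg_lq_concave (q B b lam0 y : ℝ) (hq : 1 < q) (hb : 0 < b) (hbB : b ≤ B)
    (hlam0 : 0 < lam0) (hlam0' : lam0 ≤ (q - 1) / (q * (B + b) ^ q))
    (hy : y ∈ Set.Icc (-B) B) :
    ConcaveOn ℝ (Set.Icc (-b) b) (fun y' => Real.exp (-(lam0 * |y - y'| ^ q))) :=
  exp_neg_lq_concave_general q B b lam0 y hq hlam0 hlam0' hy
end

section
/- Fix reals h₁ ≠ h₂ and q > 1. For p ∈ [0,1], let φ(p) = inf_{y ∈ ℝ} (p|y - h₁|^q + (1-p)|y - h₂|^q). Then φ(p) = p(1-p)|h₂ - h₁|^q / (p^{1/(q-1)} + (1-p)^{1/(q-1)})^{q-1}, and the infimum is attained at y = (p^r h₁ + (1-p)^r h₂)/(p^r + (1-p)^r) with r = 1/(q-1). -/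
open Real

/-- Tangent-line inequality for `t ↦ t ^ q` (rpow), `q > 1`. -/
lemma tangent_rpow (q : ℝ) (hq : 1 < q) {a c : ℝ} (ha : 0 ≤ a) (hc : 0 < c) :
    c ^ q + q * c ^ (q - 1) * (a - c) ≤ a ^ q := by
  have h1 : (-1 : ℝ) ≤ a / c - 1 := by
    have := div_nonneg ha hc.le; linarith
  have h2 := one_add_mul_self_le_rpow_one_add h1 hq.le
  have h3 : (1 : ℝ) + (a / c - 1) = a / c := by ring
  rw [h3, Real.div_rpow ha hc.le] at h2
  have hcq : (0 : ℝ) < c ^ q := Real.rpow_pos_of_pos hc q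
  have h4 := mul_le_mul_of_nonneg_left h2 hcq.le
  rw [mul_div_cancel₀ _ (ne_of_gt hcq)] at h4
  have hcq1 : c ^ (q - 1) = c ^ q / c := by
    rw [Real.rpow_sub hc, Real.rpow_one]
  rw [hcq1]
  calc c ^ q + q * (c ^ q / c) * (a - c)
      = c ^ q * (1 + q * (a / c - 1)) := by field_simp
    _ ≤ a ^ q := h4

/-- For `q > 1` and `h₁ ≠ h₂`, with `φ(p) = inf_y (p|y-h₁|^q + (1-p)|y-h₂|^q)` for
`p ∈ [0,1]`, one has `φ(p) = p(1-p)|h₂-h₁|^q / (p^{1/(q-1)} + (1-p)^{1/(q-1)})^{q-1}`,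
the infimum being attained at `y = (p^r h₁ + (1-p)^r h₂)/(p^r + (1-p)^r)` with
`r = 1/(q-1)`. -/
theorem phi_lq_formula (q h₁ h₂ : ℝ) (hq : 1 < q) (hne : h₁ ≠ h₂)
    (p : ℝ) (hp : p ∈ Set.Icc (0 : ℝ) 1) :
    (⨅ y : ℝ, p * |y - h₁| ^ q + (1 - p) * |y - h₂| ^ q) =
      p * (1 - p) * |h₂ - h₁| ^ q /
        (p ^ ((1 : ℝ) / (q - 1)) + (1 - p) ^ ((1 : ℝ) / (q - 1))) ^ (q - 1) ∧
    (p * |((p ^ ((1 : ℝ) / (q - 1)) * h₁ + (1 - p) ^ ((1 : ℝ) / (q - 1)) * h₂) /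
          (p ^ ((1 : ℝ) / (q - 1)) + (1 - p) ^ ((1 : ℝ) / (q - 1)))) - h₁| ^ q +
      (1 - p) * |((p ^ ((1 : ℝ) / (q - 1)) * h₁ + (1 - p) ^ ((1 : ℝ) / (q - 1)) * h₂) /
          (p ^ ((1 : ℝ) / (q - 1)) + (1 - p) ^ ((1 : ℝ) / (q - 1)))) - h₂| ^ q) =
      (⨅ y : ℝ, p * |y - h₁| ^ q + (1 - p) * |y - h₂| ^ q) := by
  obtain ⟨hp0, hp1⟩ := hp
  have hq1 : (0 : ℝ) < q - 1 := by linarith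
  have hrne : (1 : ℝ) / (q - 1) ≠ 0 := one_div_ne_zero (ne_of_gt hq1)
  have hq0 : q ≠ 0 := by positivity
  have hd : (0 : ℝ) < |h₂ - h₁| := abs_pos.mpr (sub_ne_zero.mpr (Ne.symm hne))
  set r : ℝ := 1 / (q - 1) with hr
  have hrq : r * (q - 1) = 1 := by rw [hr]; field_simp
  -- edge case p = 0
  rcases eq_or_lt_of_le hp0 with h0 | hp0'
  · have hp' : p = 0 := h0.symm
    subst hp'
    have lb : ∀ y : ℝ, (0:ℝ) ≤ 0 * |y - h₁| ^ q + (1 - 0) * |y - h₂| ^ q := by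
      intro y; positivity
    have hbdd : BddBelow (Set.range fun y : ℝ =>
        0 * |y - h₁| ^ q + (1 - 0) * |y - h₂| ^ q) :=
      ⟨0, by rintro x ⟨y, rfl⟩; exact lb y⟩
    have hat : 0 * |h₂ - h₁| ^ q + (1 - 0) * |h₂ - h₂| ^ q = 0 := by
      simp [Real.zero_rpow hq0]
    have hinf : (⨅ y : ℝ, 0 * |y - h₁| ^ q + (1 - 0) * |y - h₂| ^ q) = 0 :=
      le_antisymm ((ciInf_le hbdd h₂).trans_eq hat) (le_ciInf lb)
    rw [hinf]
    constructor
    · simp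
    · rw [Real.zero_rpow hrne]
      simp [Real.zero_rpow hq0]
  rcases eq_or_lt_of_le hp1 with h1 | hp1'
  · subst h1
    have lb : ∀ y : ℝ, (0:ℝ) ≤ 1 * |y - h₁| ^ q + (1 - 1) * |y - h₂| ^ q := by
      intro y
      have : (1:ℝ) - 1 = 0 := by ring
      rw [this]; positivity
    have hbdd : BddBelow (Set.range fun y : ℝ =>
        1 * |y - h₁| ^ q + (1 - 1) * |y - h₂| ^ q) :=
      ⟨0, by rintro x ⟨y, rfl⟩; exact lb y⟩
    have hat : 1 * |h₁ - h₁| ^ q + (1 - 1) * |h₁ - h₂| ^ q = 0 := by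
      simp [Real.zero_rpow hq0]
    have hinf : (⨅ y : ℝ, 1 * |y - h₁| ^ q + (1 - 1) * |y - h₂| ^ q) = 0 :=
      le_antisymm ((ciInf_le hbdd h₁).trans_eq hat) (le_ciInf lb)
    rw [hinf]
    constructor
    · simp
    · have h110 : (1:ℝ) - 1 = 0 := by ring
      rw [h110, Real.zero_rpow hrne]
      simp [Real.zero_rpow hq0]
  -- main case 0 < p < 1
  have h1p : (0:ℝ) < 1 - p := by linarith
  set A := p ^ r with hA
  set B := (1 - p) ^ r with hB
  have hApos : 0 < A := Real.rpow_pos_of_pos hp0' r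
  have hBpos : 0 < B := Real.rpow_pos_of_pos h1p r
  set S := A + B with hSdef
  have hS : 0 < S := by positivity
  set d := |h₂ - h₁| with hdd
  set ys := (A * h₁ + B * h₂) / S with hys
  have key1 : |ys - h₁| = B * d / S := by
    have e : ys - h₁ = B * (h₂ - h₁) / S := by
      rw [hys]; field_simp; ring
    rw [e, abs_div, abs_mul, abs_of_pos hBpos, abs_of_pos hS]
  have key2 : |ys - h₂| = A * d / S := by
    have e : ys - h₂ = A * (h₁ - h₂) / S := by
      rw [hys]; field_simp; ring
    rw [e, abs_div, abs_mul, abs_of_pos hApos, abs_of_pos hS, hdd, abs_sub_comm]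
  set as := B * d / S with has
  set bs := A * d / S with hbs
  have haspos : 0 < as := by positivity
  have hbspos : 0 < bs := by positivity
  set lam := p * (1 - p) * d ^ (q - 1) / S ^ (q - 1) with hlam
  have hlampos : 0 < lam := by positivity
  have hBq : B ^ (q - 1) = 1 - p := by
    rw [hB, ← Real.rpow_mul h1p.le, hrq, Real.rpow_one]
  have hAq : A ^ (q - 1) = p := by
    rw [hA, ← Real.rpow_mul hp0'.le, hrq, Real.rpow_one]
  have hw1 : p * as ^ (q - 1) = lam := by
    rw [has, Real.div_rpow (by positivity) hS.le, Real.mul_rpow hBpos.le hd.le, hBq, hlam]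
    ring
  have hw2 : (1 - p) * bs ^ (q - 1) = lam := by
    rw [hbs, Real.div_rpow (by positivity) hS.le, Real.mul_rpow hApos.le hd.le, hAq, hlam]
    ring
  have hasq : as ^ q = as ^ (q - 1) * as := by
    nth_rewrite 1 [show q = (q - 1) + 1 by ring]
    rw [Real.rpow_add_one (ne_of_gt haspos)]
  have hbsq : bs ^ q = bs ^ (q - 1) * bs := by
    nth_rewrite 1 [show q = (q - 1) + 1 by ring]
    rw [Real.rpow_add_one (ne_of_gt hbspos)]
  have habd : as + bs = d := by
    rw [has, hbs]; field_simp [hSdef]; ring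
  set V := p * (1 - p) * d ^ q / S ^ (q - 1) with hV
  have hdq : d ^ q = d ^ (q - 1) * d := by
    nth_rewrite 1 [show q = (q - 1) + 1 by ring]
    rw [Real.rpow_add_one (ne_of_gt hd)]
  have hlamd : lam * d = V := by
    rw [hlam, hV, hdq]; ring
  have hval : p * as ^ q + (1 - p) * bs ^ q = V := by
    rw [hasq, hbsq, ← mul_assoc, ← mul_assoc, hw1, hw2, ← mul_add, habd, hlamd]
  have lb : ∀ y : ℝ, V ≤ p * |y - h₁| ^ q + (1 - p) * |y - h₂| ^ q := by
    intro y
    set a := |y - h₁| with ha'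
    set b := |y - h₂| with hb'
    have ha : 0 ≤ a := abs_nonneg _
    have hb : 0 ≤ b := abs_nonneg _
    have hab : d ≤ a + b := by
      rw [hdd, ha', hb', show h₂ - h₁ = (y - h₁) - (y - h₂) by ring]
      exact abs_sub _ _
    have t1 := tangent_rpow q hq ha haspos
    have t2 := tangent_rpow q hq hb hbspos
    have e1 : p * (as ^ q + q * as ^ (q - 1) * (a - as)) ≤ p * a ^ q :=
      mul_le_mul_of_nonneg_left t1 hp0'.le
    have e2 : (1 - p) * (bs ^ q + q * bs ^ (q - 1) * (b - bs)) ≤ (1 - p) * b ^ q :=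
      mul_le_mul_of_nonneg_left t2 h1p.le
    have expand : p * (as ^ q + q * as ^ (q - 1) * (a - as)) +
        (1 - p) * (bs ^ q + q * bs ^ (q - 1) * (b - bs)) =
        V + q * lam * ((a + b) - d) := by
      linear_combination hval + q * (a - as) * hw1 + q * (b - bs) * hw2 - q * lam * habd
    have step : V + q * lam * ((a + b) - d) ≤ p * a ^ q + (1 - p) * b ^ q := by
      rw [← expand]; linarith
    have pos : 0 ≤ q * lam * ((a + b) - d) := by
      have : (0:ℝ) ≤ (a + b) - d := by linarith
      positivity
    linarith
  have hbdd : BddBelow (Set.range fun y : ℝ =>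
      p * |y - h₁| ^ q + (1 - p) * |y - h₂| ^ q) :=
    ⟨V, by rintro x ⟨y, rfl⟩; exact lb y⟩
  have hfys : p * |ys - h₁| ^ q + (1 - p) * |ys - h₂| ^ q = V := by
    rw [key1, key2]; exact hval
  have hinf : (⨅ y : ℝ, p * |y - h₁| ^ q + (1 - p) * |y - h₂| ^ q) = V :=
    le_antisymm ((ciInf_le hbdd ys).trans_eq hfys) (le_ciInf lb)
  exact ⟨hinf, hfys.trans hinf.symm⟩
end

section
/- With φ as above (φ(p) = p(1-p)|h₂-h₁|^q / (p^{1/(q-1)} + (1-p)^{1/(q-1)})^{q-1} for q > 1), the second derivative of φ on (0,1) is φ''(p) = -(q/(q-1)) · (p(1-p))^{(2-q)/(q-1)} · |h₂-h₁|^q / (p^{1/(q-1)} + (1-p)^{1/(q-1)})^{q+1}. -/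
/-!
With `α = 1/(q-1)` and `T(x) = x^{-α} + (1-x)^{-α}`, the identity
`x^α + (1-x)^α = (x(1-x))^α T(x)` turns `φ` into `c T^{1-q}` on `(0,1)`, so
`φ'' = c (1-q) T^{-q-1} (T T'' - q T'^2)`. Since `qα = α + 1`, the bracket is
`α(α+1) ((a+b)(a/x² + b/y²) - (a/x - b/y)²)` with `a = x^{-α}`, `b = y^{-α}`, `y = 1-x`,
which equals `α(α+1) a b (1/x + 1/y)² = α(α+1) (x(1-x))^{-α-2}`.
-/

open Real

open Set Filter Topology

lemma deriv_deriv_rpow {f f' : ℝ → ℝ} {x f'' : ℝ} (r : ℝ)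
    (hf : ∀ᶠ y in 𝓝 x, HasDerivAt f (f' y) y) (hf' : HasDerivAt f' f'' x) (hx : 0 < f x) :
    deriv (deriv fun y => f y ^ r) x =
      r * f x ^ (r - 2) * (f x * f'' + (r - 1) * f' x ^ 2) := by
  have hpos : ∀ᶠ y in 𝓝 x, 0 < f y :=
    hf.self_of_nhds.continuousAt.eventually (lt_mem_nhds hx)
  have hderiv : deriv (fun y => f y ^ r) =ᶠ[𝓝 x] fun y => f' y * r * f y ^ (r - 1) := by
    filter_upwards [hf, hpos] with y hy hy0 using (hy.rpow_const (Or.inl hy0.ne')).deriv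
  have h2 : HasDerivAt (fun y => f' y * r * f y ^ (r - 1))
      (f'' * r * f x ^ (r - 1) + f' x * r * (f' x * (r - 1) * f x ^ (r - 1 - 1))) x :=
    (hf'.mul_const r).mul (hf.self_of_nhds.rpow_const (Or.inl hx.ne'))
  rw [hderiv.deriv_eq, h2.deriv, show r - 1 - 1 = r - 2 by ring,
    show r - 1 = 1 + (r - 2) by ring, rpow_add hx, rpow_one]
  ring

lemma hasDerivAt_one_sub_rpow {x : ℝ} (hx : x < 1) (s : ℝ) :
    HasDerivAt (fun y => (1 - y) ^ s) (-(s * (1 - x) ^ (s - 1))) x := by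
  simpa using ((hasDerivAt_id x).const_sub 1).rpow_const (p := s) (Or.inl (sub_pos.2 hx).ne')

lemma hasDerivAt_rpow_add_one_sub_rpow {x : ℝ} (hx : x ∈ Ioo 0 1) (s : ℝ) :
    HasDerivAt (fun y => y ^ s + (1 - y) ^ s) (s * (x ^ (s - 1) - (1 - x) ^ (s - 1))) x :=
  ((hasDerivAt_rpow_const (Or.inl hx.1.ne')).add
    (hasDerivAt_one_sub_rpow hx.2 s)).congr_deriv (by ring)

lemma hasDerivAt_rpow_sub_one_sub_rpow {x : ℝ} (hx : x ∈ Ioo 0 1) (s : ℝ) :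
    HasDerivAt (fun y => y ^ s - (1 - y) ^ s) (s * (x ^ (s - 1) + (1 - x) ^ (s - 1))) x :=
  ((hasDerivAt_rpow_const (Or.inl hx.1.ne')).sub
    (hasDerivAt_one_sub_rpow hx.2 s)).congr_deriv (by ring)

lemma rpow_neg_add_rpow_neg {x y : ℝ} (hx : 0 < x) (hy : 0 < y) (α : ℝ) :
    x ^ (-α) + y ^ (-α) = (x * y) ^ (-α) * (x ^ α + y ^ α) := by
  rw [mul_rpow hx.le hy.le, rpow_neg hx.le, rpow_neg hy.le]
  have := rpow_pos_of_pos hx α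
  have := rpow_pos_of_pos hy α
  field_simp
  ring

lemma rpow_neg_add_mul_sub_sq {x y : ℝ} (hx : 0 < x) (hy : 0 < y) (α : ℝ) :
    (x ^ (-α) + y ^ (-α)) * (x ^ (-α - 1 - 1) + y ^ (-α - 1 - 1)) -
        (x ^ (-α - 1) - y ^ (-α - 1)) ^ 2 = (x + y) ^ 2 * (x * y) ^ (-α - 1 - 1) := by
  simp only [rpow_sub_one hx.ne', rpow_sub_one hy.ne', rpow_sub_one (mul_pos hx hy).ne',
    mul_rpow hx.le hy.le]
  field_simp
  ring

lemma rpow_neg_add_mul_second_deriv_add_sq {x α q : ℝ} (hx : x ∈ Ioo 0 1)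
    (hαq : α * q = α + 1) :
    (x ^ (-α) + (1 - x) ^ (-α)) *
        (-α * ((-α - 1) * (x ^ (-α - 1 - 1) + (1 - x) ^ (-α - 1 - 1)))) +
      (1 - q - 1) * (-α * (x ^ (-α - 1) - (1 - x) ^ (-α - 1))) ^ 2 =
      α * (α + 1) * (x * (1 - x)) ^ (-α - 1 - 1) := by
  have key := rpow_neg_add_mul_sub_sq hx.1 (sub_pos.2 hx.2) α
  rw [add_sub_cancel, one_pow, one_mul] at key
  rw [← key]
  linear_combination (-(x ^ (-α - 1) - (1 - x) ^ (-α - 1)) ^ 2 * α) * hαq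

lemma phi_eq_mul_rpow_neg_add {c q x : ℝ} (hq : 1 < q) (hx : x ∈ Ioo 0 1) :
    x * (1 - x) * c / (x ^ ((1 : ℝ) / (q - 1)) + (1 - x) ^ ((1 : ℝ) / (q - 1))) ^ (q - 1) =
      c * (x ^ (-(1 / (q - 1))) + (1 - x) ^ (-(1 / (q - 1)))) ^ (1 - q) := by
  obtain ⟨hx0, hx1⟩ := hx
  have hx1' : 0 < 1 - x := sub_pos.2 hx1
  have hxx : 0 < x * (1 - x) := mul_pos hx0 hx1'
  have hS : 0 < x ^ ((1 : ℝ) / (q - 1)) + (1 - x) ^ ((1 : ℝ) / (q - 1)) := by positivity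
  rw [rpow_neg_add_rpow_neg hx0 hx1', mul_rpow (by positivity) hS.le, ← rpow_mul hxx.le,
    show -(1 / (q - 1)) * (1 - q) = 1 by field_simp [(sub_pos.2 hq).ne']; ring, rpow_one,
    show 1 - q = -(q - 1) by ring, rpow_neg hS.le]
  field_simp

lemma one_sub_mul_rpow_neg_add_mul_eq {q x : ℝ} (hq : 1 < q) (hx : x ∈ Ioo 0 1) :
    (1 - q) * (x ^ (-(1 / (q - 1))) + (1 - x) ^ (-(1 / (q - 1)))) ^ (1 - q - 2) *
        (1 / (q - 1) * (1 / (q - 1) + 1) * (x * (1 - x)) ^ (-(1 / (q - 1)) - 1 - 1)) =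
      -(q / (q - 1)) * (x * (1 - x)) ^ ((2 - q) / (q - 1)) /
        (x ^ ((1 : ℝ) / (q - 1)) + (1 - x) ^ ((1 : ℝ) / (q - 1))) ^ (q + 1) := by
  obtain ⟨hx0, hx1⟩ := hx
  have hx1' : 0 < 1 - x := sub_pos.2 hx1
  have hxx : 0 < x * (1 - x) := mul_pos hx0 hx1'
  have hq1 : q - 1 ≠ 0 := (sub_pos.2 hq).ne'
  have hS : 0 < x ^ ((1 : ℝ) / (q - 1)) + (1 - x) ^ ((1 : ℝ) / (q - 1)) := by positivity
  rw [rpow_neg_add_rpow_neg hx0 hx1', mul_rpow (by positivity) hS.le, ← rpow_mul hxx.le,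
    show 1 - q - 2 = -(q + 1) by ring, rpow_neg hS.le, div_eq_mul_inv,
    show (2 - q) / (q - 1) = -(1 / (q - 1)) * -(q + 1) + (-(1 / (q - 1)) - 1 - 1) by
      field_simp; ring,
    rpow_add hxx]
  field_simp
  ring

theorem phi_lq_second_deriv_general (q h₁ h₂ : ℝ) (hq : 1 < q)
    (p : ℝ) (hp : p ∈ Set.Ioo (0 : ℝ) 1) :
    deriv (deriv (fun x : ℝ => x * (1 - x) * |h₂ - h₁| ^ q /
        (x ^ ((1 : ℝ) / (q - 1)) + (1 - x) ^ ((1 : ℝ) / (q - 1))) ^ (q - 1))) p =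
      -(q / (q - 1)) * (p * (1 - p)) ^ ((2 - q) / (q - 1)) * |h₂ - h₁| ^ q /
        (p ^ ((1 : ℝ) / (q - 1)) + (1 - p) ^ ((1 : ℝ) / (q - 1))) ^ (q + 1) := by
  set α := (1 : ℝ) / (q - 1) with hα
  have hαq : α * q = α + 1 := by rw [hα]; field_simp [(sub_pos.2 hq).ne']; ring
  have hφ : (fun x : ℝ => x * (1 - x) * |h₂ - h₁| ^ q / (x ^ α + (1 - x) ^ α) ^ (q - 1))
      =ᶠ[𝓝 p] fun x => |h₂ - h₁| ^ q * (x ^ (-α) + (1 - x) ^ (-α)) ^ (1 - q) := by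
    filter_upwards [Ioo_mem_nhds hp.1 hp.2] with x hx using phi_eq_mul_rpow_neg_add hq hx
  have hT : ∀ᶠ x in 𝓝 p, HasDerivAt (fun y => y ^ (-α) + (1 - y) ^ (-α))
      (-α * (x ^ (-α - 1) - (1 - x) ^ (-α - 1))) x := by
    filter_upwards [Ioo_mem_nhds hp.1 hp.2] with x hx
      using hasDerivAt_rpow_add_one_sub_rpow hx (-α)
  have hT' := (hasDerivAt_rpow_sub_one_sub_rpow hp (-α - 1)).const_mul (-α)
  have hTpos : 0 < p ^ (-α) + (1 - p) ^ (-α) := by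
    have := hp.1; have := sub_pos.2 hp.2; positivity
  simp only [hφ.deriv.deriv_eq, deriv_const_mul_field']
  rw [deriv_deriv_rpow (1 - q) hT hT' hTpos, rpow_neg_add_mul_second_deriv_add_sq hp hαq,
    one_sub_mul_rpow_neg_add_mul_eq hq hp]
  ring

/-- Second derivative of `φ(p) = p(1-p)|h₂-h₁|^q / (p^{1/(q-1)} + (1-p)^{1/(q-1)})^{q-1}`
on `(0,1)`:
`φ''(p) = -(q/(q-1)) (p(1-p))^{(2-q)/(q-1)} |h₂-h₁|^q / (p^{1/(q-1)} + (1-p)^{1/(q-1)})^{q+1}`. -/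
theorem phi_lq_second_deriv (q h₁ h₂ : ℝ) (hq : 1 < q) (hne : h₁ ≠ h₂)
    (p : ℝ) (hp : p ∈ Set.Ioo (0 : ℝ) 1) :
    deriv (deriv (fun x : ℝ => x * (1 - x) * |h₂ - h₁| ^ q /
        (x ^ ((1 : ℝ) / (q - 1)) + (1 - x) ^ ((1 : ℝ) / (q - 1))) ^ (q - 1))) p =
      -(q / (q - 1)) * (p * (1 - p)) ^ ((2 - q) / (q - 1)) * |h₂ - h₁| ^ q /
        (p ^ ((1 : ℝ) / (q - 1)) + (1 - p) ^ ((1 : ℝ) / (q - 1))) ^ (q + 1) :=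
  phi_lq_second_deriv_general q h₁ h₂ hq p hp
end

section
/- For Bernoulli measures Q₊, Q₋ with parameters p₊, p₋ and d := (√(p₊(1-p₋)) - √((1-p₊)p₋))², for any nonnegative integer k: ∫ (dQ₊^{⊗k} ∧ dQ₋^{⊗k}) ≥ 1 - √(1 - (1-d)^k) ≥ 1 - √(kd). -/
/-!
With `S = ∑ₓ min(p x, q x)` and `∑ₓ max(p x, q x) = 2 - S`, Cauchy–Schwarz applied to
`√(p q) = √min · √max` bounds the Bhattacharyya coefficient `BC = ∑ₓ √(p q)` by
`BC² ≤ S (2 - S)`, i.e. `1 - S ≤ √(1 - BC²)` (Le Cam). The coefficient is multiplicative over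
product measures, and for the two Bernoulli laws `BC² = 1 - d`, so for the `k`-fold products
`BC² = (1 - d)ᵏ`. The second bound is Bernoulli's inequality `(1 - d)ᵏ ≥ 1 - k d`.
-/

open MeasureTheory Real

noncomputable def bern (p : ℝ) : Measure Bool :=
  (ENNReal.ofReal p) • Measure.dirac true + (ENNReal.ofReal (1 - p)) • Measure.dirac false

open Finset

namespace MeasureTheory.Measure

variable {α : Type*} [MeasurableSpace α]

theorem absolutelyContinuous_of_forall_singleton [Countable α] {μ ν : Measure α}
    (h : ∀ x, ν {x} = 0 → μ {x} = 0) : μ ≪ ν := by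
  intro s hs
  rw [← Set.biUnion_of_singleton s, measure_biUnion_null_iff s.to_countable] at hs ⊢
  exact fun x hx => h x (hs x hx)

theorem absolutelyContinuous_pi_of_countable {ι : Type*} [Fintype ι] {β : ι → Type*}
    [∀ i, MeasurableSpace (β i)] [∀ i, MeasurableSingletonClass (β i)] [∀ i, Countable (β i)]
    {μ ν : ∀ i, Measure (β i)} [∀ i, SigmaFinite (μ i)] [∀ i, SigmaFinite (ν i)]
    (h : ∀ i, μ i ≪ ν i) : Measure.pi μ ≪ Measure.pi ν := by
  refine absolutelyContinuous_of_forall_singleton fun x hx => ?_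
  rw [pi_singleton, prod_eq_zero_iff] at hx ⊢
  obtain ⟨i, -, hi⟩ := hx
  exact ⟨i, mem_univ i, h i hi⟩

variable [MeasurableSingletonClass α]

theorem rnDeriv_mul_measure_singleton {μ ν : Measure α} [HaveLebesgueDecomposition μ ν]
    [SFinite ν] (h : μ ≪ ν) (x : α) : μ.rnDeriv ν x * ν {x} = μ {x} := by
  rw [← lintegral_singleton, setLIntegral_rnDeriv h]

theorem integral_min_rnDeriv_eq_sum_min [Fintype α] {μ₁ μ₂ ν : Measure α} [IsFiniteMeasure μ₁]
    [IsFiniteMeasure μ₂] [IsFiniteMeasure ν] (h₁ : μ₁ ≪ ν) (h₂ : μ₂ ≪ ν) :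
    ∫ x, min (μ₁.rnDeriv ν x).toReal (μ₂.rnDeriv ν x).toReal ∂ν
      = ∑ x, min (μ₁.real {x}) (μ₂.real {x}) := by
  rw [integral_fintype Integrable.of_finite]
  refine Finset.sum_congr rfl fun x _ => ?_
  rw [smul_eq_mul, mul_comm, min_mul_of_nonneg _ _ measureReal_nonneg, measureReal_def,
    ← ENNReal.toReal_mul, ← ENNReal.toReal_mul, rnDeriv_mul_measure_singleton h₁,
    rnDeriv_mul_measure_singleton h₂, measureReal_def, measureReal_def]

end MeasureTheory.Measure

open MeasureTheory.Measure

theorem sq_sum_sqrt_mul_le_sum_min_mul_sum_max {ι : Type*} (s : Finset ι) {p q : ι → ℝ}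
    (hp : ∀ i, 0 ≤ p i) (hq : ∀ i, 0 ≤ q i) :
    (∑ i ∈ s, √(p i * q i)) ^ 2 ≤ (∑ i ∈ s, min (p i) (q i)) * ∑ i ∈ s, max (p i) (q i) := by
  have hmin : ∀ i, 0 ≤ min (p i) (q i) := fun i => le_min (hp i) (hq i)
  have hmax : ∀ i, 0 ≤ max (p i) (q i) := fun i => (hp i).trans (le_max_left _ _)
  calc (∑ i ∈ s, √(p i * q i)) ^ 2
      = (∑ i ∈ s, √(min (p i) (q i)) * √(max (p i) (q i))) ^ 2 := by
        simp only [← sqrt_mul (hmin _), min_mul_max]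
    _ ≤ (√(∑ i ∈ s, min (p i) (q i)) * √(∑ i ∈ s, max (p i) (q i))) ^ 2 := by
        gcongr ?_ ^ 2
        exact sum_sqrt_mul_sqrt_le s hmin hmax
    _ = _ := by
        rw [mul_pow, sq_sqrt (sum_nonneg fun i _ => hmin i),
          sq_sqrt (sum_nonneg fun i _ => hmax i)]

/-- One minus the squared Hellinger distance of `μ` and `ν`. -/
noncomputable def bhattacharyya {α : Type*} [Fintype α] [MeasurableSpace α]
    (μ ν : Measure α) : ℝ :=
  ∑ x, √(μ.real {x} * ν.real {x})

theorem one_sub_sqrt_one_sub_bhattacharyya_sq_le_sum_min {α : Type*} [Fintype α]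
    [MeasurableSpace α] [MeasurableSingletonClass α] (μ ν : Measure α) [IsProbabilityMeasure μ]
    [IsProbabilityMeasure ν] :
    1 - √(1 - bhattacharyya μ ν ^ 2) ≤ ∑ x, min (μ.real {x}) (ν.real {x}) := by
  set S := ∑ x, min (μ.real {x}) (ν.real {x})
  have hμ : ∑ x, μ.real {x} = 1 := by simp
  have hν : ∑ x, ν.real {x} = 1 := by simp
  have hmax : ∑ x, max (μ.real {x}) (ν.real {x}) = 2 - S := by
    rw [eq_sub_iff_add_eq', ← sum_add_distrib]
    simp only [min_add_max]
    rw [sum_add_distrib, hμ, hν]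
    norm_num
  have hCS := sq_sum_sqrt_mul_le_sum_min_mul_sum_max univ (p := fun x => μ.real {x})
    (q := fun x => ν.real {x}) (fun _ => measureReal_nonneg) (fun _ => measureReal_nonneg)
  rw [hmax] at hCS
  have hsq : (1 - S) ^ 2 ≤ 1 - bhattacharyya μ ν ^ 2 := by
    unfold bhattacharyya; linear_combination hCS
  linarith [(le_abs_self _).trans (abs_le_sqrt hsq)]

theorem bhattacharyya_pi {ι : Type*} [Fintype ι] [DecidableEq ι] {β : ι → Type*}
    [∀ i, Fintype (β i)] [∀ i, MeasurableSpace (β i)] [∀ i, MeasurableSingletonClass (β i)]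
    (μ ν : ∀ i, Measure (β i)) [∀ i, SigmaFinite (μ i)] [∀ i, SigmaFinite (ν i)] :
    bhattacharyya (Measure.pi μ) (Measure.pi ν) = ∏ i, bhattacharyya (μ i) (ν i) := by
  simp only [bhattacharyya, Fintype.prod_sum]
  refine sum_congr rfl fun x _ => ?_
  simp only [measureReal_def, pi_singleton, ENNReal.toReal_prod, ← prod_mul_distrib]
  exact sqrt_prod _ fun i _ => by positivity

instance (p : ℝ) : IsFiniteMeasure (bern p) := by
  constructor
  simp [bern]

theorem bern_real_true {p : ℝ} (hp : 0 ≤ p) : (bern p).real {true} = p := by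
  simp [bern, measureReal_def, hp]

theorem bern_real_false {p : ℝ} (hp : p ≤ 1) : (bern p).real {false} = 1 - p := by
  simp [bern, measureReal_def, hp]

theorem isProbabilityMeasure_bern {p : ℝ} (hp : p ∈ Set.Icc (0 : ℝ) 1) :
    IsProbabilityMeasure (bern p) := by
  constructor
  simp [bern, ← ENNReal.ofReal_add hp.1 (sub_nonneg.2 hp.2)]

theorem bhattacharyya_bern {p q : ℝ} (hp : p ∈ Set.Icc (0 : ℝ) 1) (hq : q ∈ Set.Icc (0 : ℝ) 1) :
    bhattacharyya (bern p) (bern q) = √(p * q) + √((1 - p) * (1 - q)) := by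
  rw [bhattacharyya, Fintype.sum_bool, bern_real_true hp.1, bern_real_true hq.1,
    bern_real_false hp.2, bern_real_false hq.2]

theorem sq_bhattacharyya_bern {p q : ℝ} (hp : p ∈ Set.Icc (0 : ℝ) 1) (hq : q ∈ Set.Icc (0 : ℝ) 1) :
    bhattacharyya (bern p) (bern q) ^ 2 = 1 - (√(p * (1 - q)) - √((1 - p) * q)) ^ 2 := by
  rw [bhattacharyya_bern hp hq]
  obtain ⟨hp0, hp1⟩ := hp
  obtain ⟨hq0, hq1⟩ := hq
  have hp' : 0 ≤ 1 - p := sub_nonneg.2 hp1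
  have hq' : 0 ≤ 1 - q := sub_nonneg.2 hq1
  have hcross : √(p * q) * √((1 - p) * (1 - q)) = √(p * (1 - q)) * √((1 - p) * q) := by
    rw [← sqrt_mul (by positivity), ← sqrt_mul (by positivity)]
    ring_nf
  rw [add_sq, sub_sq, sq_sqrt (by positivity), sq_sqrt (by positivity), sq_sqrt (by positivity),
    sq_sqrt (by positivity)]
  linear_combination 2 * hcross

/-- For Bernoulli measures `Q₊, Q₋` with parameters `p₊, p₋` and
`d = (√(p₊(1-p₋)) - √((1-p₊)p₋))²`, for any `k ∈ ℕ`, writing the `∧`-similarity of the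
`k`-fold products via densities w.r.t. the dominating product measure,
`∫ (dQ₊^{⊗k} ∧ dQ₋^{⊗k}) ≥ 1 - √(1 - (1-d)^k) ≥ 1 - √(kd)`. -/
theorem bernoulli_product_min_similarity (pp pm : ℝ)
    (hpp : pp ∈ Set.Icc (0 : ℝ) 1) (hpm : pm ∈ Set.Icc (0 : ℝ) 1) (k : ℕ) :
    1 - Real.sqrt (1 - (1 - (Real.sqrt (pp * (1 - pm)) - Real.sqrt ((1 - pp) * pm)) ^ 2) ^ k)
      ≤ ∫ x, min
          (((Measure.pi (fun _ : Fin k => bern pp)).rnDeriv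
            (Measure.pi (fun _ : Fin k => bern pp + bern pm)) x).toReal)
          (((Measure.pi (fun _ : Fin k => bern pm)).rnDeriv
            (Measure.pi (fun _ : Fin k => bern pp + bern pm)) x).toReal)
        ∂(Measure.pi (fun _ : Fin k => bern pp + bern pm)) ∧
    1 - Real.sqrt (k * (Real.sqrt (pp * (1 - pm)) - Real.sqrt ((1 - pp) * pm)) ^ 2)
      ≤ 1 - Real.sqrt
          (1 - (1 - (Real.sqrt (pp * (1 - pm)) - Real.sqrt ((1 - pp) * pm)) ^ 2) ^ k) := by
  set d := (√(pp * (1 - pm)) - √((1 - pp) * pm)) ^ 2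
  have := isProbabilityMeasure_bern hpp
  have := isProbabilityMeasure_bern hpm
  have hBC : bhattacharyya (Measure.pi fun _ : Fin k => bern pp)
      (Measure.pi fun _ : Fin k => bern pm) ^ 2 = (1 - d) ^ k := by
    rw [bhattacharyya_pi, prod_const, card_univ, Fintype.card_fin, ← pow_mul, mul_comm,
      pow_mul, sq_bhattacharyya_bern hpp hpm]
  refine ⟨?_, ?_⟩
  · have hpp_ac : bern pp ≪ bern pp + bern pm := AbsolutelyContinuous.rfl.add_right _
    have hpm_ac : bern pm ≪ bern pp + bern pm := AbsolutelyContinuous.rfl.add_right' _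
    rw [integral_min_rnDeriv_eq_sum_min (absolutelyContinuous_pi_of_countable fun _ => hpp_ac)
      (absolutelyContinuous_pi_of_countable fun _ => hpm_ac), ← hBC]
    exact one_sub_sqrt_one_sub_bhattacharyya_sq_le_sum_min _ _
  · have hd : d ≤ 1 := by
      linarith [sq_bhattacharyya_bern hpp hpm, sq_nonneg (bhattacharyya (bern pp) (bern pm))]
    have bernoulli := one_add_mul_le_pow (a := -d) (by linarith) k
    rw [mul_neg, ← sub_eq_add_neg, ← sub_eq_add_neg] at bernoulli
    gcongr
    linarith
end

section
/- Let η > 0, b ∈ ℝ, and φ(t) = (e^t - 1 - t)/t² for t ≠ 0 with φ(0) = 1/2. For any real random variable W with W ≤ b almost surely and E[W²] < ∞, E[exp(η(W - E[W] - η φ(ηb) E[W²]))] ≤ 1. -/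
/-!
Write `φ(t) = ∫₀¹ (1 - s) e^{ts} ds`, the integral form of the Taylor remainder of `exp` at `0`;
this form makes `φ` visibly increasing. Hence `W ≤ b` gives `e^{ηW} ≤ 1 + ηW + η² φ(ηb) W²`
pointwise, so `E[e^{ηW}] ≤ 1 + x ≤ e^x` with `x = η E[W] + η² φ(ηb) E[W²]`, which is the claim
after multiplying by `e^{-x}`.
-/

open MeasureTheory Real

noncomputable def bernsteinPhi (t : ℝ) : ℝ := ∫ s in (0 : ℝ)..1, (1 - s) * exp (t * s)

lemma sq_mul_bernsteinPhi (t : ℝ) : t ^ 2 * bernsteinPhi t = exp t - 1 - t := by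
  rcases eq_or_ne t 0 with rfl | ht
  · simp
  have hderiv : ∀ s ∈ Set.uIcc (0 : ℝ) 1, HasDerivAt
      (fun s => (1 - s) * exp (t * s) / t + exp (t * s) / t ^ 2) ((1 - s) * exp (t * s)) s := by
    intro s _
    have hexp : HasDerivAt (fun s => exp (t * s)) (exp (t * s) * t) s :=
      ((hasDerivAt_id' s).const_mul t).exp.congr_deriv (by simp)
    refine ((((hasDerivAt_id' s).const_sub 1).mul hexp).div_const t).add
      (hexp.div_const (t ^ 2)) |>.congr_deriv ?_
    field_simp
    ring
  have hcont : ContinuousOn (fun s => (1 - s) * exp (t * s)) (Set.uIcc 0 1) := by fun_prop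
  rw [bernsteinPhi, intervalIntegral.integral_eq_sub_of_hasDerivAt hderiv hcont.intervalIntegrable]
  field_simp
  simp only [mul_zero, exp_zero]
  ring

lemma bernsteinPhi_zero : bernsteinPhi 0 = 1 / 2 := by
  simp only [bernsteinPhi, zero_mul, exp_zero, mul_one]
  rw [intervalIntegral.integral_sub intervalIntegrable_const intervalIntegral.intervalIntegrable_id]
  norm_num

lemma bernsteinPhi_eq_ite (t : ℝ) :
    bernsteinPhi t = if t = 0 then 1 / 2 else (exp t - 1 - t) / t ^ 2 := by
  split_ifs with ht
  · rw [ht, bernsteinPhi_zero]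
  · rw [eq_div_iff (pow_ne_zero 2 ht), mul_comm, sq_mul_bernsteinPhi]

lemma bernsteinPhi_mono : Monotone bernsteinPhi := by
  intro x y hxy
  refine intervalIntegral.integral_mono_on zero_le_one
    ((by fun_prop : Continuous _).intervalIntegrable _ _)
    ((by fun_prop : Continuous _).intervalIntegrable _ _) fun s hs => ?_
  gcongr
  · linarith [hs.2]
  · exact hs.1

lemma exp_le_one_add_add_sq_mul_bernsteinPhi {x y : ℝ} (hxy : x ≤ y) :
    exp x ≤ 1 + x + x ^ 2 * bernsteinPhi y := by
  have : x ^ 2 * bernsteinPhi x ≤ x ^ 2 * bernsteinPhi y := by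
    gcongr
    exact bernsteinPhi_mono hxy
  linarith [sq_mul_bernsteinPhi x]

lemma one_add_mul_exp_neg_le_one (x : ℝ) : (1 + x) * exp (-x) ≤ 1 := by
  calc (1 + x) * exp (-x) ≤ exp x * exp (-x) := by gcongr; linarith [add_one_le_exp x]
    _ = 1 := by rw [← exp_add, add_neg_cancel, exp_zero]

lemma integral_exp_mul_le_of_ae_le {Ω : Type*} [MeasurableSpace Ω] {μ : Measure Ω}
    [IsProbabilityMeasure μ] {W : Ω → ℝ} {b η : ℝ} (hWb : ∀ᵐ ω ∂μ, W ω ≤ b) (hW1 : Integrable W μ)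
    (hW2 : Integrable (fun ω => W ω ^ 2) μ) (hη : 0 ≤ η) :
    ∫ ω, exp (η * W ω) ∂μ
      ≤ 1 + η * ∫ ω, W ω ∂μ + η ^ 2 * bernsteinPhi (η * b) * ∫ ω, W ω ^ 2 ∂μ := by
  set c := η ^ 2 * bernsteinPhi (η * b)
  have hbound : ∀ᵐ ω ∂μ, exp (η * W ω) ≤ 1 + η * W ω + c * W ω ^ 2 := by
    filter_upwards [hWb] with ω hω
    convert exp_le_one_add_add_sq_mul_bernsteinPhi (mul_le_mul_of_nonneg_left hω hη) using 1
    ring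
  have hint : Integrable (fun ω => 1 + η * W ω + c * W ω ^ 2) μ :=
    ((integrable_const 1).add (hW1.const_mul η)).add (hW2.const_mul c)
  have hexp_int : Integrable (fun ω => exp (η * W ω)) μ := by
    refine hint.mono' (continuous_exp.comp_aestronglyMeasurable
      (hW1.aestronglyMeasurable.const_mul η)) ?_
    filter_upwards [hbound] with ω hω
    rwa [norm_of_nonneg (exp_pos _).le]
  calc ∫ ω, exp (η * W ω) ∂μ ≤ ∫ ω, (1 + η * W ω + c * W ω ^ 2) ∂μ :=
        integral_mono_ae hexp_int hint hbound
    _ = 1 + η * ∫ ω, W ω ∂μ + c * ∫ ω, W ω ^ 2 ∂μ := by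
        have hlin : Integrable (fun ω => 1 + η * W ω) μ :=
          (integrable_const 1).add (hW1.const_mul η)
        rw [integral_add hlin (hW2.const_mul c),
          integral_add (integrable_const 1) (hW1.const_mul η), integral_const_mul,
          integral_const_mul]
        simp

theorem bernstein_exp_moment_general {Ω : Type*} [MeasurableSpace Ω]
    (μ : Measure Ω) [IsProbabilityMeasure μ] (W : Ω → ℝ)
    (b : ℝ) (hWb : ∀ᵐ ω ∂μ, W ω ≤ b)
    (hW1 : Integrable W μ) (hW2 : Integrable (fun ω => (W ω) ^ 2) μ)
    (η : ℝ) (hη : 0 < η)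
    (φ : ℝ → ℝ)
    (hφ : ∀ t : ℝ, φ t = if t = 0 then 1 / 2 else (Real.exp t - 1 - t) / t ^ 2) :
    ∫ ω, Real.exp (η * (W ω - (∫ ω', W ω' ∂μ)
        - η * φ (η * b) * (∫ ω', (W ω') ^ 2 ∂μ))) ∂μ ≤ 1 := by
  have hφ_eq : φ = bernsteinPhi := funext fun t => by rw [hφ, bernsteinPhi_eq_ite]
  subst hφ_eq
  set x := η * ∫ ω, W ω ∂μ + η ^ 2 * bernsteinPhi (η * b) * ∫ ω, W ω ^ 2 ∂μ
  have hsplit : ∀ ω, exp (η * (W ω - ∫ ω', W ω' ∂μ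
      - η * bernsteinPhi (η * b) * ∫ ω', W ω' ^ 2 ∂μ)) = exp (η * W ω) * exp (-x) := by
    intro ω
    rw [← exp_add]
    congr 1
    ring
  simp_rw [hsplit]
  rw [integral_mul_const]
  calc (∫ ω, exp (η * W ω) ∂μ) * exp (-x) ≤ (1 + x) * exp (-x) := by
        gcongr
        linarith [integral_exp_mul_le_of_ae_le hWb hW1 hW2 hη.le]
    _ ≤ 1 := one_add_mul_exp_neg_le_one x

/-- Bernstein-type exponential moment inequality: let `η > 0`, `b ∈ ℝ`, and
`φ(t) = (e^t - 1 - t)/t²` for `t ≠ 0` with `φ(0) = 1/2`. For any real random variable `W`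
with `W ≤ b` a.s. and `E[W²] < ∞`, `E[exp(η(W - E W - η φ(ηb) E[W²]))] ≤ 1`. -/
theorem bernstein_exp_moment {Ω : Type*} [MeasurableSpace Ω]
    (μ : Measure Ω) [IsProbabilityMeasure μ] (W : Ω → ℝ) (hWmeas : Measurable W)
    (b : ℝ) (hWb : ∀ᵐ ω ∂μ, W ω ≤ b)
    (hW1 : Integrable W μ) (hW2 : Integrable (fun ω => (W ω) ^ 2) μ)
    (η : ℝ) (hη : 0 < η)
    (φ : ℝ → ℝ)
    (hφ : ∀ t : ℝ, φ t = if t = 0 then 1 / 2 else (Real.exp t - 1 - t) / t ^ 2) :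
    ∫ ω, Real.exp (η * (W ω - (∫ ω', W ω' ∂μ)
        - η * φ (η * b) * (∫ ω', (W ω') ^ 2 ∂μ))) ∂μ ≤ 1 :=
  bernstein_exp_moment_general μ W b hWb hW1 hW2 η hη φ hφ
end
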